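/- arXiv:1604.03887 — 2 statements merged into one kernel-verified Lean document; each statement's English description precedes it below -/
import Mathlib

section
/- Let $X \subseteq \mathbb{R}^n$ be compact convex, $\omega$ a distance generating function with modulus 1, $V$ its Bregman distance, and for $x \in X$, $y \in \mathbb{R}^n$ define the prox-mapping $P_x(y) = \arg\min_{z \in X}\{\langle y, z\rangle + V(x,z)\}$. Then for every $u, x \in X$ and $y \in \mathbb{R}^n$: $V(P_x(y), u) \leq V(x,u) + \langle y, u - x\rangle + \tfrac{1}{2}\|y\|_*^2$, where $\|y\|_* = \max\{\langle x, y\rangle : \|x\| \leq 1\}$. -/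
/-!
Optimality of `p` gives `⟪y - g x + g p, u - p⟫ ≥ 0`: comparing `p` with the points
`z = p + t • (u - p)` and using the convexity inequality `ω p ≥ ω z + ⟪g z, p - z⟫` gives
`⟪y - g x + g z, u - p⟫ ≥ 0`, and `t → 0⁺` by continuity of `g`. The three-point identity of the Bregman
distance turns this into `V p u ≤ V x u + ⟪y, u - x⟫ + (⟪y, x - p⟫ - V x p)`, and strong convexity
bounds the last term by `‖y‖_* ‖x - p‖ - ‖x - p‖² / 2 ≤ ‖y‖_*² / 2`.
-/

open scoped RealInnerProductSpace

section

variable {E : Type*} [NormedAddCommGroup E] [InnerProductSpace ℝ E]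

theorem inner_le_mul_seminorm_of_isGreatest (N : Seminorm ℝ E) {y : E} {d : ℝ}
    (hd : IsGreatest {r : ℝ | ∃ x, N x ≤ 1 ∧ ⟪x, y⟫ = r} d) (v : E) :
    ⟪y, v⟫ ≤ d * N v := by
  have hd_nonneg : 0 ≤ d := hd.2 ⟨0, by simp, by simp⟩
  have hshift : ∀ t > 0, ⟪y, v⟫ ≤ d * (N v + t) := by
    intro t ht
    have hs : 0 < N v + t := by linarith [apply_nonneg N v]
    have hmem : ⟪(N v + t)⁻¹ • v, y⟫ ∈ {r : ℝ | ∃ x, N x ≤ 1 ∧ ⟪x, y⟫ = r} := by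
      refine ⟨_, ?_, rfl⟩
      rw [map_smul_eq_mul, Real.norm_eq_abs, abs_of_pos (inv_pos.2 hs), inv_mul_le_iff₀ hs]
      linarith
    have hle := hd.2 hmem
    rw [real_inner_smul_left, real_inner_comm, inv_mul_le_iff₀ hs] at hle
    linarith
  refine le_of_forall_pos_le_add fun ε hε => ?_
  have hε' := hshift (ε / (d + 1)) (by positivity)
  have hεd : d * (ε / (d + 1)) ≤ ε := by
    rw [mul_div_assoc', div_le_iff₀ (by positivity)]
    nlinarith
  linarith

theorem inner_add_nonneg_of_isMinOn {X : Set E} (hX : Convex ℝ X) {ω : E → ℝ} {g : E → E}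
    (hg : Continuous g) {c p u : E} (hp : p ∈ X) (hu : u ∈ X)
    (hsub : ∀ z ∈ X, ω z + ⟪g z, p - z⟫ ≤ ω p)
    (hmin : IsMinOn (fun z => ⟪c, z⟫ + ω z) X p) :
    0 ≤ ⟪c + g p, u - p⟫ := by
  set F : ℝ → ℝ := fun t => ⟪c + g (p + t • (u - p)), u - p⟫ with hF
  have hF_cont : Continuous F := by fun_prop
  have hF_nonneg : ∀ t ∈ Set.Ioo (0 : ℝ) 1, 0 ≤ F t := by
    rintro t ⟨ht₀, ht₁⟩
    set z := p + t • (u - p)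
    have hz : z ∈ X := hX.add_smul_sub_mem hp hu ⟨ht₀.le, ht₁.le⟩
    have hzp : z - p = t • (u - p) := by simp [z]
    have hpz : p - z = -(t • (u - p)) := by rw [← hzp, neg_sub]
    have hmin_z : ⟪c, p⟫ + ω p ≤ ⟪c, z⟫ + ω z := hmin hz
    have hsub_z := hsub z hz
    rw [hpz, inner_neg_right, real_inner_smul_right] at hsub_z
    have hc : ⟪c, z⟫ = ⟪c, p⟫ + t * ⟪c, u - p⟫ := by
      rw [← sub_eq_iff_eq_add', ← inner_sub_right, hzp, real_inner_smul_right]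
    have htF : 0 ≤ t * F t := by
      simp only [hF, inner_add_left, mul_add]
      linarith
    exact (mul_nonneg_iff_of_pos_left ht₀).1 htF
  have hlim : Filter.Tendsto F (nhdsWithin 0 (Set.Ioi 0)) (nhds (F 0)) :=
    (hF_cont.tendsto 0).mono_left nhdsWithin_le_nhds
  have hev : ∀ᶠ t in nhdsWithin (0 : ℝ) (Set.Ioi 0), 0 ≤ F t :=
    Filter.mem_of_superset (Ioo_mem_nhdsGT one_pos) hF_nonneg
  simpa [hF] using ge_of_tendsto hlim hev

theorem bregman_three_point {ω : E → ℝ} {g : E → E} {V : E → E → ℝ}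
    (hV : ∀ x z, V x z = ω z - ω x - ⟪g x, z - x⟫) (x p u : E) :
    V p u = V x u - V x p - ⟪g p - g x, u - p⟫ := by
  simp only [hV, inner_sub_left, inner_sub_right]
  ring

end

theorem stmt_1_general {n : ℕ} (X : Set (EuclideanSpace ℝ (Fin n)))
    (hXconvex : Convex ℝ X)
    (ω : EuclideanSpace ℝ (Fin n) → ℝ) (g : EuclideanSpace ℝ (Fin n) → EuclideanSpace ℝ (Fin n))
    (nn dn : EuclideanSpace ℝ (Fin n) → ℝ)
    -- `nn` is a norm on ℝ^n
    (hnn : ∀ x y, nn (x + y) ≤ nn x + nn y)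
    (hnn_smul : ∀ (c : ℝ) x, nn (c • x) = |c| * nn x)
    -- `dn` is the dual norm of `nn`
    (hdn : ∀ y, IsGreatest {r : ℝ | ∃ x, nn x ≤ 1 ∧ ⟪x, y⟫ = r} (dn y))
    -- `ω` is continuously differentiable with gradient `g`, strongly convex with modulus 1
    (hgcont : Continuous g)
    (hstrong : ∀ x ∈ X, ∀ z ∈ X, ω z ≥ ω x + ⟪g x, z - x⟫ + (1 / 2) * (nn (z - x)) ^ 2)
    (V : EuclideanSpace ℝ (Fin n) → EuclideanSpace ℝ (Fin n) → ℝ)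
    (hV : ∀ x z, V x z = ω z - ω x - ⟪g x, z - x⟫)
    (x u : EuclideanSpace ℝ (Fin n)) (hx : x ∈ X) (hu : u ∈ X)
    (y : EuclideanSpace ℝ (Fin n))
    (p : EuclideanSpace ℝ (Fin n)) (hp : p ∈ X)
    (hpmin : IsMinOn (fun z => ⟪y, z⟫ + V x z) X p) :
    V p u ≤ V x u + ⟪y, u - x⟫ + (1 / 2) * (dn y) ^ 2 := by
  let N : Seminorm ℝ (EuclideanSpace ℝ (Fin n)) :=
    Seminorm.of nn hnn fun c v => by rw [Real.norm_eq_abs, hnn_smul]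
  have hopt : 0 ≤ ⟪(y - g x) + g p, u - p⟫ := by
    refine inner_add_nonneg_of_isMinOn (ω := ω) hXconvex hgcont hp hu
      (fun z hz => by nlinarith [hstrong z hz p hp, sq_nonneg (nn (p - z))]) fun z hz => ?_
    show ⟪y - g x, p⟫ + ω p ≤ ⟪y - g x, z⟫ + ω z
    have hpz : ⟪y, p⟫ + V x p ≤ ⟪y, z⟫ + V x z := hpmin hz
    simp only [hV, inner_sub_left, inner_sub_right] at hpz ⊢
    linarith
  have hdual : ⟪y, x - p⟫ ≤ dn y * nn (x - p) := inner_le_mul_seminorm_of_isGreatest N (hdn y) _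
  have hVxp : nn (x - p) ^ 2 / 2 ≤ V x p := by
    have h := hstrong x hx p hp
    rw [show nn (p - x) = nn (x - p) from map_sub_rev N p x] at h
    linarith [hV x p]
  calc V p u = V x u - V x p - ⟪g p - g x, u - p⟫ := bregman_three_point hV x p u
    _ ≤ V x u - V x p + ⟪y, u - p⟫ := by
      simp only [inner_add_left, inner_sub_left] at hopt ⊢
      linarith
    _ = V x u + ⟪y, u - x⟫ + (⟪y, x - p⟫ - V x p) := by
      rw [← sub_add_sub_cancel u x p, inner_add_right]
      ring
    _ ≤ V x u + ⟪y, u - x⟫ + (1 / 2) * (dn y) ^ 2 := by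
      nlinarith [sq_nonneg (dn y - nn (x - p))]

/-- The prox-mapping lemma: `V (P_x y) u ≤ V x u + ⟪y, u - x⟫ + (1/2) ‖y‖_*^2`. -/
theorem stmt_1 {n : ℕ} (X : Set (EuclideanSpace ℝ (Fin n)))
    (hXcompact : IsCompact X) (hXconvex : Convex ℝ X)
    (ω : EuclideanSpace ℝ (Fin n) → ℝ) (g : EuclideanSpace ℝ (Fin n) → EuclideanSpace ℝ (Fin n))
    (nn dn : EuclideanSpace ℝ (Fin n) → ℝ)
    -- `nn` is a norm on ℝ^n
    (hnn : ∀ x y, nn (x + y) ≤ nn x + nn y) (hnn₀ : ∀ x, (nn x = 0 ↔ x = 0))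
    (hnn_smul : ∀ (c : ℝ) x, nn (c • x) = |c| * nn x)
    -- `dn` is the dual norm of `nn`
    (hdn : ∀ y, IsGreatest {r : ℝ | ∃ x, nn x ≤ 1 ∧ ⟪x, y⟫ = r} (dn y))
    -- `ω` is continuously differentiable with gradient `g`, strongly convex with modulus 1
    (hgrad : ∀ x, HasGradientAt ω (g x) x) (hgcont : Continuous g)
    (hstrong : ∀ x ∈ X, ∀ z ∈ X, ω z ≥ ω x + ⟪g x, z - x⟫ + (1 / 2) * (nn (z - x)) ^ 2)
    (V : EuclideanSpace ℝ (Fin n) → EuclideanSpace ℝ (Fin n) → ℝ)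
    (hV : ∀ x z, V x z = ω z - ω x - ⟪g x, z - x⟫)
    (x u : EuclideanSpace ℝ (Fin n)) (hx : x ∈ X) (hu : u ∈ X)
    (y : EuclideanSpace ℝ (Fin n))
    (p : EuclideanSpace ℝ (Fin n)) (hp : p ∈ X)
    (hpmin : IsMinOn (fun z => ⟪y, z⟫ + V x z) X p) :
    V p u ≤ V x u + ⟪y, u - x⟫ + (1 / 2) * (dn y) ^ 2 :=
  stmt_1_general X hXconvex ω g nn dn hnn hnn_smul hdn hgcont hstrong V hV x u hx hu y p hp hpmin
end

section
/- Let $I = \{s, \ldots, N\}$ be partitioned into $\mathcal{B}$ and $\mathcal{N}$, and let $\gamma_k > 0$, $\eta_k > 0$, $M_F, M_G \geq 0$, $D \geq 0$ be given, along with reals $c_k$ (for $k \in \mathcal{B}$). Suppose $\sum_{k\in\mathcal{N}}\gamma_k\eta_k + \sum_{k\in\mathcal{B}}\gamma_k c_k \leq D^2 + \tfrac{1}{2}\sum_{k\in\mathcal{B}}\gamma_k^2 M_F^2 + \tfrac{1}{2}\sum_{k\in\mathcal{N}}\gamma_k^2 M_G^2$ and $\tfrac{N-s+1}{2}\min_{k\in\mathcal{N}}\gamma_k\eta_k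 > D^2 + \tfrac{1}{2}\sum_{k\in\mathcal{B}}\gamma_k^2 M_F^2 + \tfrac{1}{2}\sum_{k\in\mathcal{N}}\gamma_k^2 M_G^2$. Then either $|\mathcal{B}| \geq (N-s+1)/2$ or $\sum_{k\in\mathcal{B}}\gamma_k c_k \leq 0$. In particular $\mathcal{B} \neq \emptyset$. -/
/-!
If fewer than half of the indices lie in `B`, more than half lie in `𝒩`, and there each
`γ k * η k` exceeds `2R / (N - s + 1)`, where `R` is the right-hand side of the budget
inequality. So the `𝒩`-sum alone exceeds `R`, which forces the `B`-sum to be negative;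
in particular `B` is nonempty.
-/

open Finset

theorem lt_sum_of_lt_mul_of_lt_card {ι 𝕜 : Type*} [Field 𝕜] [LinearOrder 𝕜]
    [IsStrictOrderedRing 𝕜] {s : Finset ι} {a : ι → 𝕜} {R m : 𝕜}
    (hR : 0 ≤ R) (hm : 0 < m) (hcard : m < #s) (h : ∀ k ∈ s, R < m * a k) :
    R < ∑ k ∈ s, a k := by
  have hs : s.Nonempty := card_pos.mp (by exact_mod_cast hm.trans hcard)
  have hlt : #s * R < m * ∑ k ∈ s, a k := by
    simpa [mul_sum] using sum_lt_sum_of_nonempty hs h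
  have hle : m * R ≤ #s * R := mul_le_mul_of_nonneg_right hcard.le hR
  exact lt_of_mul_lt_mul_left (hle.trans_lt hlt) hm.le

theorem sub_add_one_le_card_add_card_of_union_eq_Icc {s N : ℕ} {B 𝒩 : Finset ℕ}
    (h : B ∪ 𝒩 = Icc s N) : (N : ℝ) - s + 1 ≤ #B + #𝒩 := by
  have hunion := card_union_le B 𝒩
  rw [h, Nat.card_Icc] at hunion
  have : N + 1 ≤ #B + #𝒩 + s := by omega
  have : ((N + 1 : ℕ) : ℝ) ≤ ((#B + #𝒩 + s : ℕ) : ℝ) := by exact_mod_cast this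
  push_cast at this
  linarith

theorem stmt_5_general (s N : ℕ) (hsN : s ≤ N) (B 𝒩 : Finset ℕ)
    (hunion : B ∪ 𝒩 = Finset.Icc s N)
    (γ η c : ℕ → ℝ) (MF MG D : ℝ)
    (hsum : ∑ k ∈ 𝒩, γ k * η k + ∑ k ∈ B, γ k * c k ≤
      D ^ 2 + (1 / 2) * ∑ k ∈ B, γ k ^ 2 * MF ^ 2 + (1 / 2) * ∑ k ∈ 𝒩, γ k ^ 2 * MG ^ 2)
    (hmin : ∀ k ∈ 𝒩, ((N : ℝ) - (s : ℝ) + 1) / 2 * (γ k * η k) >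
      D ^ 2 + (1 / 2) * ∑ k ∈ B, γ k ^ 2 * MF ^ 2 + (1 / 2) * ∑ k ∈ 𝒩, γ k ^ 2 * MG ^ 2) :
    B.Nonempty ∧
      ((B.card : ℝ) ≥ ((N : ℝ) - (s : ℝ) + 1) / 2 ∨ ∑ k ∈ B, γ k * c k ≤ 0) := by
  have hR : 0 ≤ D ^ 2 + (1 / 2) * ∑ k ∈ B, γ k ^ 2 * MF ^ 2 +
      (1 / 2) * ∑ k ∈ 𝒩, γ k ^ 2 * MG ^ 2 := by positivity
  have hlen : (0 : ℝ) < N - s + 1 := by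
    have : (s : ℝ) ≤ N := by exact_mod_cast hsN
    linarith
  have hcard := sub_add_one_le_card_add_card_of_union_eq_Icc hunion
  by_cases hB : ((N : ℝ) - s + 1) / 2 ≤ #B
  · have hBpos : (0 : ℝ) < #B := by linarith
    exact ⟨card_pos.mp (by exact_mod_cast hBpos), Or.inl hB⟩
  · have h𝒩 : ((N : ℝ) - s + 1) / 2 < #𝒩 := by linarith
    have h𝒩sum := lt_sum_of_lt_mul_of_lt_card hR (half_pos hlen) h𝒩 hmin
    have hneg : ∑ k ∈ B, γ k * c k < 0 := by linarith
    exact ⟨nonempty_of_sum_ne_zero hneg.ne, Or.inr hneg.le⟩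

theorem stmt_5 (s N : ℕ) (hsN : s ≤ N) (B 𝒩 : Finset ℕ)
    (hunion : B ∪ 𝒩 = Finset.Icc s N) (hdisj : Disjoint B 𝒩)
    (γ η c : ℕ → ℝ) (MF MG D : ℝ)
    (hγ : ∀ k ∈ Finset.Icc s N, 0 < γ k) (hη : ∀ k ∈ Finset.Icc s N, 0 < η k)
    (hMF : 0 ≤ MF) (hMG : 0 ≤ MG) (hD : 0 ≤ D)
    (hsum : ∑ k ∈ 𝒩, γ k * η k + ∑ k ∈ B, γ k * c k ≤
      D ^ 2 + (1 / 2) * ∑ k ∈ B, γ k ^ 2 * MF ^ 2 + (1 / 2) * ∑ k ∈ 𝒩, γ k ^ 2 * MG ^ 2)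
    (hmin : ∀ k ∈ 𝒩, ((N : ℝ) - (s : ℝ) + 1) / 2 * (γ k * η k) >
      D ^ 2 + (1 / 2) * ∑ k ∈ B, γ k ^ 2 * MF ^ 2 + (1 / 2) * ∑ k ∈ 𝒩, γ k ^ 2 * MG ^ 2) :
    B.Nonempty ∧
      ((B.card : ℝ) ≥ ((N : ℝ) - (s : ℝ) + 1) / 2 ∨ ∑ k ∈ B, γ k * c k ≤ 0) :=
  stmt_5_general s N hsN B 𝒩 hunion γ η c MF MG D hsum hmin
end
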